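/- Let d be a negative-type distance on a finite set X, let A, B ⊆ X with |A| = |B| = k ≥ 1, and let π : A → B be a bijection that is the identity on A ∩ B. Then ∑_{a∈A} (d(A − a + π(a)) − d(A)) ≥ (1 − 2/k)·d(B) − (1 + 2/k)·d(A), where A − a + b denotes (A \ {a}) ∪ {b}. -/

import Mathlib

/-!
Write `β` for the bilinear form of `d` on `X → ℝ` and `𝟙 S` for indicator vectors. Negative
type says `β (u - v) (u - v) ≤ 0` whenever `u` and `v` have the same total mass, i.e.
`β u u + β v v ≤ 2 β u v`. With `u = 𝟙 A`, `v = 𝟙 B` this gives `d(A,A) + d(B,B) ≤ 2 d(A,B)`;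
with `u = k (e a + e (π a))`, `v = 𝟙 A + 𝟙 B`, summed over `a ∈ A`, it bounds the matching
cost: `2k ∑ d(a, π a) ≤ d(A,A) + 2 d(A,B) + d(B,B)`. Since `π` fixes `A ∩ B`, `π a ∉ A - a`,
so the exchange sum is exactly `d(A,B) - d(A,A) - ∑ d(a, π a)`, and the two bounds combine,
the first one weighted by `k - 1`.
-/

open Finset

/-- `d` is a distance of negative type on the finite type `X`. -/
def NegType {X : Type*} [Fintype X] (d : X → X → ℝ) : Prop :=
  ∀ x : X → ℝ, ∑ i, x i = 0 → ∑ i, ∑ j, x i * d i j * x j ≤ 0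

/-- The dispersion of a finite set: sum of distances over unordered pairs. -/
noncomputable def disp {X : Type*} (d : X → X → ℝ) (A : Finset X) : ℝ :=
  (∑ a ∈ A, ∑ b ∈ A, d a b) / 2

/-- Sum of all distances between two sets. -/
def dsum {X : Type*} (d : X → X → ℝ) (A B : Finset X) : ℝ :=
  ∑ a ∈ A, ∑ b ∈ B, d a b

section
variable {X : Type*} {d : X → X → ℝ}

lemma dsum_comm (hsymm : ∀ a b, d a b = d b a) (A B : Finset X) : dsum d A B = dsum d B A := by
  rw [dsum, sum_comm]
  exact sum_congr rfl fun _ _ => sum_congr rfl fun _ _ => hsymm _ _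

variable [DecidableEq X]

lemma disp_insert (hsymm : ∀ a b, d a b = d b a) (hdiag : ∀ a, d a a = 0) {b : X}
    {T : Finset X} (hb : b ∉ T) :
    disp d (insert b T) = disp d T + ∑ x ∈ T, d b x := by
  have hcol : ∑ x ∈ T, d x b = ∑ x ∈ T, d b x := sum_congr rfl fun x _ => hsymm x b
  simp only [disp, sum_insert hb, hdiag, sum_add_distrib, hcol]
  ring

lemma disp_exchange (hsymm : ∀ a b, d a b = d b a) (hdiag : ∀ a, d a a = 0) {A : Finset X}
    {a b : X} (ha : a ∈ A) (hb : b ∉ A.erase a) :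
    disp d (insert b (A.erase a)) - disp d A
      = (∑ x ∈ A, d b x) - (∑ x ∈ A, d a x) - d a b := by
  have hA := disp_insert hsymm hdiag (notMem_erase a A)
  rw [insert_erase ha] at hA
  rw [disp_insert hsymm hdiag hb, hA, sum_erase_eq_sub ha, sum_erase_eq_sub ha, hdiag,
    hsymm b a]
  ring

lemma sum_disp_exchange (hsymm : ∀ a b, d a b = d b a) (hdiag : ∀ a, d a a = 0)
    {A B : Finset X} {π : X → X} (hbij : Set.BijOn π A B) (hfix : ∀ a ∈ A, a ∈ B → π a = a) :
    ∑ a ∈ A, (disp d (insert (π a) (A.erase a)) - disp d A)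
      = dsum d A B - dsum d A A - ∑ a ∈ A, d a (π a) := by
  have hnew : ∀ a ∈ A, π a ∉ A.erase a := fun a ha h =>
    ne_of_mem_erase h <| hbij.injOn (mem_of_mem_erase h) ha <|
      hfix _ (mem_of_mem_erase h) (hbij.mapsTo ha)
  have hBA : ∑ a ∈ A, ∑ x ∈ A, d (π a) x = dsum d A B := by
    rw [dsum, sum_comm]
    exact sum_congr rfl fun x _ =>
      sum_nbij π hbij.mapsTo hbij.injOn hbij.surjOn fun a _ => hsymm _ _
  rw [sum_congr rfl fun a ha => disp_exchange hsymm hdiag ha (hnew a ha),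
    sum_sub_distrib, sum_sub_distrib, hBA]
  rfl

end

section
variable {X : Type*} [Fintype X] [DecidableEq X] {d : X → X → ℝ}

lemma NegType.toBilin'_le_zero (hneg : NegType d) {x : X → ℝ} (hx : ∑ i, x i = 0) :
    (Matrix.of d).toBilin' x x ≤ 0 := by
  simpa [Matrix.toBilin'_apply] using hneg x hx

lemma NegType.toBilin'_add_le (hsymm : ∀ a b, d a b = d b a) (hneg : NegType d)
    {u v : X → ℝ} (huv : ∑ i, u i = ∑ i, v i) :
    (Matrix.of d).toBilin' u u + (Matrix.of d).toBilin' v v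
      ≤ 2 * (Matrix.of d).toBilin' u v := by
  have hsymm' : (Matrix.of d).toBilin' v u = (Matrix.of d).toBilin' u v := by
    have : (Matrix.of d).IsSymm := Matrix.IsSymm.ext fun i j => hsymm j i
    exact (Matrix.isSymm_toBilin'_iff_isSymm.mpr this).eq v u
  have h := hneg.toBilin'_le_zero (x := u - v) (by simp [sum_sub_distrib, huv])
  simp only [map_sub, LinearMap.sub_apply, hsymm'] at h
  linarith

lemma NegType.card_mul_sum_toBilin'_le (hsymm : ∀ a b, d a b = d b a) (hneg : NegType d)
    {ι : Type*} (I : Finset ι) (s : ι → X → ℝ) (m : ℝ) (hs : ∀ i ∈ I, ∑ x, s i x = m) :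
    #I * ∑ i ∈ I, (Matrix.of d).toBilin' (s i) (s i)
      ≤ (Matrix.of d).toBilin' (∑ i ∈ I, s i) (∑ i ∈ I, s i) := by
  set β := (Matrix.of d).toBilin'
  set w := ∑ i ∈ I, s i
  obtain rfl | hI := I.eq_empty_or_nonempty
  · simp [w]
  have hn : (0 : ℝ) < #I := by exact_mod_cast hI.card_pos
  have hw : ∑ x, w x = #I * m := by
    simp only [w, Finset.sum_apply]
    rw [sum_comm, sum_congr rfl hs, sum_const, nsmul_eq_mul]
  -- each `#I • s i` has the same mass as `w`
  have hi : ∀ i ∈ I, #I * #I * β (s i) (s i) + β w w ≤ 2 * (#I * β (s i) w) := by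
    intro i hi
    have h := hneg.toBilin'_add_le hsymm (u := (#I : ℝ) • s i) (v := w)
      (by simp [← mul_sum, hs i hi, hw])
    simpa only [map_smul, LinearMap.smul_apply, smul_eq_mul, mul_assoc] using h
  have hsum := sum_le_sum hi
  simp only [sum_add_distrib, ← mul_sum, sum_const, nsmul_eq_mul] at hsum
  rw [← LinearMap.sum_apply, ← map_sum] at hsum
  refine le_of_mul_le_mul_left ?_ hn
  linarith

lemma toBilin'_of_sum_single (S T : Finset X) :
    (Matrix.of d).toBilin' (∑ a ∈ S, Pi.single a 1) (∑ b ∈ T, Pi.single b 1) = dsum d S T := by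
  simp only [map_sum, LinearMap.sum_apply, Matrix.toBilin'_single, Matrix.of_apply]
  exact sum_comm

lemma sum_sum_single (S : Finset X) : ∑ i, (∑ a ∈ S, Pi.single a (1 : ℝ)) i = #S := by
  simp only [Finset.sum_apply]
  rw [sum_comm]
  simp

lemma NegType.dsum_add_dsum_le (hsymm : ∀ a b, d a b = d b a) (hneg : NegType d)
    {A B : Finset X} (hcard : #A = #B) :
    dsum d A A + dsum d B B ≤ 2 * dsum d A B := by
  simpa only [toBilin'_of_sum_single] using
    hneg.toBilin'_add_le hsymm (u := ∑ a ∈ A, Pi.single a 1) (v := ∑ b ∈ B, Pi.single b 1)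
      (by rw [sum_sum_single, sum_sum_single, hcard])

lemma NegType.two_mul_card_mul_sum_le (hsymm : ∀ a b, d a b = d b a) (hdiag : ∀ a, d a a = 0)
    (hneg : NegType d) {A B : Finset X} {π : X → X} (hbij : Set.BijOn π A B) :
    2 * #A * ∑ a ∈ A, d a (π a) ≤ dsum d A A + 2 * dsum d A B + dsum d B B := by
  set s : X → X → ℝ := fun a => Pi.single a 1 + Pi.single (π a) 1
  have hmass : ∀ a ∈ A, ∑ x, s a x = 2 := fun a _ => by
    norm_num [s, sum_add_distrib]
  have hdiagonal : ∀ a, (Matrix.of d).toBilin' (s a) (s a) = 2 * d a (π a) := fun a => by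
    simp only [s, map_add, LinearMap.add_apply, Matrix.toBilin'_single, Matrix.of_apply, hdiag,
      hsymm (π a) a]
    ring
  have htotal : ∑ a ∈ A, s a = ∑ a ∈ A, Pi.single a 1 + ∑ b ∈ B, Pi.single b 1 := by
    rw [sum_add_distrib]
    congr 1
    exact sum_nbij π hbij.mapsTo hbij.injOn hbij.surjOn fun _ _ => rfl
  have h := hneg.card_mul_sum_toBilin'_le hsymm A s 2 hmass
  simp only [hdiagonal, htotal, map_add, LinearMap.add_apply, toBilin'_of_sum_single,
    ← mul_sum, dsum_comm hsymm B A] at h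
  linarith

end

theorem stmt_3_general {X : Type*} [Fintype X] [DecidableEq X] (d : X → X → ℝ)
    (hsymm : ∀ a b, d a b = d b a)
    (hdiag : ∀ a, d a a = 0) (hneg : NegType d)
    (k : ℕ) (hk : 1 ≤ k) (A B : Finset X) (hAcard : A.card = k) (hBcard : B.card = k)
    (π : X → X) (hbij : Set.BijOn π ↑A ↑B)
    (hfix : ∀ a ∈ A, a ∈ B → π a = a) :
    ∑ a ∈ A, (disp d (insert (π a) (A.erase a)) - disp d A)
      ≥ (1 - 2 / k) * disp d B - (1 + 2 / k) * disp d A := by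
  have hk1 : (1 : ℝ) ≤ k := by exact_mod_cast hk
  have hcross := hneg.dsum_add_dsum_le hsymm (hAcard.trans hBcard.symm)
  have hmatch := hneg.two_mul_card_mul_sum_le hsymm hdiag hbij
  rw [hAcard] at hmatch
  rw [sum_disp_exchange hsymm hdiag hbij hfix, disp, disp, ← dsum, ← dsum, ge_iff_le,
    ← sub_nonneg]
  have hsplit : dsum d A B - dsum d A A - ∑ a ∈ A, d a (π a)
      - ((1 - 2 / k) * (dsum d B B / 2) - (1 + 2 / k) * (dsum d A A / 2))
      = (((k : ℝ) - 1) * (2 * dsum d A B - dsum d A A - dsum d B B)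
        + (dsum d A A + 2 * dsum d A B + dsum d B B - 2 * k * ∑ a ∈ A, d a (π a))) / (2 * k) := by
    have : (k : ℝ) ≠ 0 := by positivity
    field_simp
    ring
  rw [hsplit]
  have hweighted : 0 ≤ ((k : ℝ) - 1) * (2 * dsum d A B - dsum d A A - dsum d B B) :=
    mul_nonneg (by linarith) (by linarith)
  exact div_nonneg (add_nonneg hweighted (by linarith)) (by positivity)

theorem stmt_3 {X : Type*} [Fintype X] [DecidableEq X] (d : X → X → ℝ)
    (hsymm : ∀ a b, d a b = d b a) (hnonneg : ∀ a b, 0 ≤ d a b)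
    (hdiag : ∀ a, d a a = 0) (hneg : NegType d)
    (k : ℕ) (hk : 1 ≤ k) (A B : Finset X) (hAcard : A.card = k) (hBcard : B.card = k)
    (π : X → X) (hbij : Set.BijOn π ↑A ↑B)
    (hfix : ∀ a ∈ A, a ∈ B → π a = a) :
    ∑ a ∈ A, (disp d (insert (π a) (A.erase a)) - disp d A)
      ≥ (1 - 2 / k) * disp d B - (1 + 2 / k) * disp d A :=
  stmt_3_general d hsymm hdiag hneg k hk A B hAcard hBcard π hbij hfix
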